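/- Let H_A = H_B be a finite-dimensional Hilbert space of dimension d ≥ 2 and let ρ* be a maximally entangled pure state on H_A ⊗ H_B. Then the trace-norm distance from ρ* to the set of separable states satisfies D_s(ρ*) ≥ 2 − (4 log 2)/(log d). -/

import Mathlib

open scoped Matrix Kronecker Classical ComplexOrder ENNReal

noncomputable section

namespace QPaper

/-- The trace norm `‖A‖₁ = Tr √(AᴴA)` of a matrix, computed as the sum of its
singular values (square roots of the eigenvalues of `AᴴA`). -/
def traceNorm {n : Type*} [Fintype n] [DecidableEq n] (A : Matrix n n ℂ) : ℝ :=
  ∑ i, Real.sqrt ((Matrix.posSemidef_conjTranspose_mul_self A).1.eigenvalues i)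

/-- A quantum state: a positive semidefinite matrix of unit trace. -/
def IsState {n : Type*} [Fintype n] [DecidableEq n] (ρ : Matrix n n ℂ) : Prop :=
  ρ.PosSemidef ∧ ρ.trace = 1

/-- A pure state: a state which is a rank-one projection `|v⟩⟨v|`. -/
def IsPure {n : Type*} [Fintype n] [DecidableEq n] (ρ : Matrix n n ℂ) : Prop :=
  IsState ρ ∧ ∃ v : n → ℂ, ρ = Matrix.vecMulVec v (star v)

/-- The von Neumann entropy `H(ρ) = -Tr ρ log ρ`, via the eigenvalues of `ρ`. -/
def vnEntropy {n : Type*} [Fintype n] [DecidableEq n] (ρ : Matrix n n ℂ) : ℝ :=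
  if h : ρ.IsHermitian then ∑ i, Real.negMulLog (h.eigenvalues i) else 0

/-- The logarithm of a Hermitian matrix, via the spectral decomposition
(junk value `0` on non-Hermitian matrices). -/
def matLog {n : Type*} [Fintype n] [DecidableEq n] (ρ : Matrix n n ℂ) : Matrix n n ℂ :=
  if h : ρ.IsHermitian then
    (h.eigenvectorUnitary : Matrix n n ℂ) *
      Matrix.diagonal (fun i => (Real.log (h.eigenvalues i) : ℂ)) *
      (star (h.eigenvectorUnitary : Matrix n n ℂ)) else 0

/-- The quantum relative entropy `H(ρ‖σ) = Tr(ρ log ρ - ρ log σ)` when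
`supp ρ ⊆ supp σ`, and `+∞` otherwise (as a value in `ℝ≥0∞`). -/
def relEntropy {n : Type*} [Fintype n] [DecidableEq n] (ρ σ : Matrix n n ℂ) : ℝ≥0∞ :=
  if ∀ v : n → ℂ, σ.mulVec v = 0 → ρ.mulVec v = 0 then
    ENNReal.ofReal ((ρ * (matLog ρ - matLog σ)).trace.re) else ⊤

/-- Partial trace over the second tensor factor. -/
def ptrace2 {n m : Type*} [Fintype n] [Fintype m]
    (ρ : Matrix (n × m) (n × m) ℂ) : Matrix n n ℂ :=
  Matrix.of fun i j => ∑ k, ρ (i, k) (j, k)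

/-- Partial trace over the first tensor factor. -/
def ptrace1 {n m : Type*} [Fintype n] [Fintype m]
    (ρ : Matrix (n × m) (n × m) ℂ) : Matrix m m ℂ :=
  Matrix.of fun i j => ∑ k, ρ (k, i) (k, j)

/-- A bipartite state is separable if it lies in the convex hull of product states. -/
def IsSeparable {n m : Type*} [Fintype n] [DecidableEq n] [Fintype m] [DecidableEq m]
    (ρ : Matrix (n × m) (n × m) ℂ) : Prop :=
  ρ ∈ convexHull ℝ {τ : Matrix (n × m) (n × m) ℂ |
    ∃ (a : Matrix n n ℂ) (b : Matrix m m ℂ), IsState a ∧ IsState b ∧ τ = a ⊗ₖ b}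

/-- The relative entropy of entanglement `E_R(ρ) = inf_{σ separable} H(ρ‖σ)`. -/
def relEntEnt {n m : Type*} [Fintype n] [DecidableEq n] [Fintype m] [DecidableEq m]
    (ρ : Matrix (n × m) (n × m) ℂ) : ℝ≥0∞ :=
  ⨅ σ ∈ {σ : Matrix (n × m) (n × m) ℂ | IsState σ ∧ IsSeparable σ}, relEntropy ρ σ

/-- The trace-norm distance from `ρ` to the set of separable states. -/
def Dsep {n m : Type*} [Fintype n] [DecidableEq n] [Fintype m] [DecidableEq m]
    (ρ : Matrix (n × m) (n × m) ℂ) : ℝ :=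
  sInf {x : ℝ | ∃ σ : Matrix (n × m) (n × m) ℂ,
    IsState σ ∧ IsSeparable σ ∧ x = traceNorm (ρ - σ)}

/-- The binary entropy `h₂(x) = -x log x - (1-x) log (1-x)`. -/
def binEnt (x : ℝ) : ℝ := Real.negMulLog x + Real.negMulLog (1 - x)

/-- The function `g(x) = (1+x) h₂(x/(1+x))`, with the convention `g(x) = 0` for `x < 0`. -/
def gg (x : ℝ) : ℝ := if 0 ≤ x then (1 + x) * binEnt (x / (1 + x)) else 0

section Channels

variable {A B E : Type*} [Fintype A] [DecidableEq A] [Fintype B] [DecidableEq B]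
  [Fintype E] [DecidableEq E]

/-- The map `Φ ⊗ Id_R` applied to an operator on `H_A ⊗ H_R`. -/
def tensorId {R : Type*} [Fintype R] [DecidableEq R]
    (Φ : Matrix A A ℂ →ₗ[ℂ] Matrix B B ℂ) (ρ : Matrix (A × R) (A × R) ℂ) :
    Matrix (B × R) (B × R) ℂ :=
  Matrix.of fun ik jl => Φ (Matrix.of fun p q => ρ (p, ik.2) (q, jl.2)) ik.1 jl.1

/-- Complete positivity of a linear map between matrix spaces. -/
def IsCP (Φ : Matrix A A ℂ →ₗ[ℂ] Matrix B B ℂ) : Prop :=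
  ∀ (r : ℕ) (ρ : Matrix (A × Fin r) (A × Fin r) ℂ), ρ.PosSemidef → (tensorId Φ ρ).PosSemidef

/-- Trace preservation. -/
def IsTP (Φ : Matrix A A ℂ →ₗ[ℂ] Matrix B B ℂ) : Prop := ∀ ρ, (Φ ρ).trace = ρ.trace

/-- A quantum channel: a completely positive trace-preserving linear map. -/
def IsChannel (Φ : Matrix A A ℂ →ₗ[ℂ] Matrix B B ℂ) : Prop := IsCP Φ ∧ IsTP Φ

/-- The diamond norm `‖Φ‖_◇ = sup_R sup_{‖ρ‖₁ = 1} ‖(Φ ⊗ Id_R)(ρ)‖₁`. -/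
def diamondNorm (Φ : Matrix A A ℂ →ₗ[ℂ] Matrix B B ℂ) : ℝ :=
  sSup {x : ℝ | ∃ (r : ℕ) (ρ : Matrix (A × Fin r) (A × Fin r) ℂ),
    traceNorm ρ = 1 ∧ x = traceNorm (tensorId Φ ρ)}

/-- `V` is a Stinespring isometry for `Φ` (with environment `E`):
`Vᴴ V = 1` and `Φ(ρ) = Tr_E (V ρ Vᴴ)`. -/
def IsStinespring (Φ : Matrix A A ℂ →ₗ[ℂ] Matrix B B ℂ) (V : Matrix (B × E) A ℂ) : Prop :=
  Vᴴ * V = 1 ∧ ∀ ρ, Φ ρ = ptrace2 (V * ρ * Vᴴ)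

/-- The channel complementary to the one given by the Stinespring isometry `V`:
`Φ̂(ρ) = Tr_B (V ρ Vᴴ)`. -/
def compl (V : Matrix (B × E) A ℂ) (ρ : Matrix A A ℂ) : Matrix E E ℂ :=
  ptrace1 (V * ρ * Vᴴ)

/-- The coherent information `I_c(Φ, ρ) = H(Φ(ρ)) - H(Φ̂(ρ))` of the channel `Φ` with
Stinespring isometry `V` at the input state `ρ`. -/
def cohInfo (Φ : Matrix A A ℂ →ₗ[ℂ] Matrix B B ℂ) (V : Matrix (B × E) A ℂ)
    (ρ : Matrix A A ℂ) : ℝ :=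
  vnEntropy (Φ ρ) - vnEntropy (compl V ρ)

/-- A channel is degradable if `Φ̂ = Θ ∘ Φ` for some channel `Θ : B → E`. -/
def IsDegradable (Φ : Matrix A A ℂ →ₗ[ℂ] Matrix B B ℂ) : Prop :=
  ∃ (e : ℕ) (V : Matrix (B × Fin e) A ℂ), IsStinespring Φ V ∧
    ∃ Θ : Matrix B B ℂ →ₗ[ℂ] Matrix (Fin e) (Fin e) ℂ,
      IsChannel Θ ∧ ∀ ρ, compl V ρ = Θ (Φ ρ)

/-- A channel is antidegradable if its complementary channel is degradable, i.e.
`Φ = Θ ∘ Φ̂` for some channel `Θ : E → B`. -/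
def IsAntidegradable (Φ : Matrix A A ℂ →ₗ[ℂ] Matrix B B ℂ) : Prop :=
  ∃ (e : ℕ) (V : Matrix (B × Fin e) A ℂ), IsStinespring Φ V ∧
    ∃ Θ : Matrix (Fin e) (Fin e) ℂ →ₗ[ℂ] Matrix B B ℂ,
      IsChannel Θ ∧ ∀ ρ, Φ ρ = Θ (compl V ρ)

/-- A channel is entanglement-breaking if `(Φ ⊗ Id_R)(ω)` is separable for every state `ω`
and every auxiliary system `R`. -/
def IsEB (Φ : Matrix A A ℂ →ₗ[ℂ] Matrix B B ℂ) : Prop :=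
  ∀ (r : ℕ) (ω : Matrix (A × Fin r) (A × Fin r) ℂ), IsState ω → IsSeparable (tensorId Φ ω)

/-- Diamond-norm distance from `Φ` to the set of degradable channels. -/
def Dd (Φ : Matrix A A ℂ →ₗ[ℂ] Matrix B B ℂ) : ℝ :=
  sInf {x : ℝ | ∃ Ψ : Matrix A A ℂ →ₗ[ℂ] Matrix B B ℂ,
    IsChannel Ψ ∧ IsDegradable Ψ ∧ x = diamondNorm (Φ - Ψ)}

/-- Diamond-norm distance from `Φ` to the set of antidegradable channels. -/
def Da (Φ : Matrix A A ℂ →ₗ[ℂ] Matrix B B ℂ) : ℝ :=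
  sInf {x : ℝ | ∃ Ψ : Matrix A A ℂ →ₗ[ℂ] Matrix B B ℂ,
    IsChannel Ψ ∧ IsAntidegradable Ψ ∧ x = diamondNorm (Φ - Ψ)}

/-- Diamond-norm distance from `Φ` to the set of entanglement-breaking channels. -/
def Deb (Φ : Matrix A A ℂ →ₗ[ℂ] Matrix B B ℂ) : ℝ :=
  sInf {x : ℝ | ∃ Ψ : Matrix A A ℂ →ₗ[ℂ] Matrix B B ℂ,
    IsChannel Ψ ∧ IsEB Ψ ∧ x = diamondNorm (Φ - Ψ)}

end Channels


/-- A maximally entangled pure state on `H_A ⊗ H_B` with `dim H_A = dim H_B = d`: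
the projection onto the unit vector `(1/√d) ∑ i, |i⟩ ⊗ |i⟩` for an orthonormal basis. -/
def IsMaxEntangled {d : ℕ} (ρ : Matrix (Fin d × Fin d) (Fin d × Fin d) ℂ) : Prop :=
  ∃ e : Fin d → Fin d → ℂ,
    (∀ i j, ∑ a, (starRingEnd ℂ) (e i a) * e j a = if i = j then 1 else 0) ∧
    ρ = Matrix.vecMulVec (fun p => ((Real.sqrt d : ℝ) : ℂ)⁻¹ * ∑ i, e i p.1 * e i p.2)
      (star fun p => ((Real.sqrt d : ℝ) : ℂ)⁻¹ * ∑ i, e i p.1 * e i p.2)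

/-- The inclusion isometry `H_A → H_B` (for `nA ≤ nB`) in the standard bases. -/
def inclV (nA nB : ℕ) : Matrix (Fin nB) (Fin nA) ℂ :=
  Matrix.of fun i j => if (i : ℕ) = (j : ℕ) then 1 else 0

/-- The identity embedding channel of states on `H_A` into states on `H_B ⊇ H_A`. -/
def embedChannel (nA nB : ℕ) : Matrix (Fin nA) (Fin nA) ℂ →ₗ[ℂ] Matrix (Fin nB) (Fin nB) ℂ where
  toFun ρ := inclV nA nB * ρ * (inclV nA nB)ᴴ
  map_add' x y := by simp [Matrix.mul_add, Matrix.add_mul]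
  map_smul' c x := by simp [Matrix.mul_smul, Matrix.smul_mul]

/-- The isometric embedding `H_A → H_B` used by the erasure channel, `dim H_B = d + 1`. -/
def eraV (d : ℕ) : Matrix (Fin (d + 1)) (Fin d) ℂ :=
  Matrix.of fun i j => if (i : ℕ) = (j : ℕ) then 1 else 0

/-- The erasure channel `Φ_p(ρ) = (1-p) ρ ⊕ p (Tr ρ) |φ⟩⟨φ|` from a `d`-dimensional system
to a `(d+1)`-dimensional one, `φ` being the last basis vector (orthogonal to `H_A`). -/
def erasure (d : ℕ) (p : ℝ) :
    Matrix (Fin d) (Fin d) ℂ →ₗ[ℂ] Matrix (Fin (d + 1)) (Fin (d + 1)) ℂ where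
  toFun ρ := ((1 : ℂ) - (p : ℂ)) • (eraV d * ρ * (eraV d)ᴴ) +
    ((p : ℂ) * ρ.trace) • Matrix.single (Fin.last d) (Fin.last d) (1 : ℂ)
  map_add' x y := by
    simp [Matrix.mul_add, Matrix.add_mul, Matrix.trace_add, mul_add, add_smul, smul_add]
    abel
  map_smul' c x := by
    simp [Matrix.mul_smul, Matrix.smul_mul, Matrix.trace_smul, smul_smul, smul_add,
      mul_left_comm, smul_comm c]


/-! For the maximally entangled vector `ψ = d^{-1/2} vec U` (`U` unitary), a product state
satisfies `⟨ψ|a ⊗ b|ψ⟩ = d⁻¹ Tr (b · U aᵀ Uᴴ) ≤ d⁻¹ Tr a Tr b = d⁻¹`, and by convexity so does every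
separable state `σ`. Pairing `ρ - σ` with the unitary reflection `2ρ - 1` bounds the trace norm:
`‖ρ - σ‖₁ ≥ Re Tr ((2ρ - 1)(ρ - σ)) = 2 - 2⟨ψ|σ|ψ⟩ ≥ 2 - 2/d`. Finally `2/d ≤ 4 log 2 / log d`
since `log d ≤ d - 1` and `log 2 > 1/2`. -/

end QPaper

namespace Matrix

variable {m n : Type*} [Fintype m] [Fintype n]

lemma star_mulVec_dotProduct (M : Matrix m n ℂ) (x : n → ℂ) (y : m → ℂ) :
    star (M *ᵥ x) ⬝ᵥ y = star x ⬝ᵥ Mᴴ *ᵥ y := by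
  rw [star_mulVec, dotProduct_mulVec]

lemma re_star_dotProduct_le (x y : n → ℂ) :
    (star x ⬝ᵥ y).re ≤ √(star x ⬝ᵥ x).re * √(star y ⬝ᵥ y).re := by
  have h := re_inner_le_norm (𝕜 := ℂ) (WithLp.toLp 2 x) (WithLp.toLp 2 y)
  rwa [EuclideanSpace.inner_toLp_toLp, dotProduct_comm, norm_eq_sqrt_re_inner (𝕜 := ℂ),
    norm_eq_sqrt_re_inner (𝕜 := ℂ), EuclideanSpace.inner_toLp_toLp,
    EuclideanSpace.inner_toLp_toLp, dotProduct_comm x, dotProduct_comm y] at h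

lemma star_dotProduct_orthonormalBasis_self (b : OrthonormalBasis n ℂ (EuclideanSpace ℂ n))
    (i : n) : star ⇑(b i) ⬝ᵥ ⇑(b i) = 1 := by
  have h := inner_self_eq_norm_sq_to_K (𝕜 := ℂ) (b i)
  rw [b.orthonormal.1 i, EuclideanSpace.inner_eq_star_dotProduct] at h
  rw [dotProduct_comm, h]
  simp

lemma isLinearMap_re_star_dotProduct_mulVec (v : n → ℂ) :
    IsLinearMap ℝ fun σ : Matrix n n ℂ => (star v ⬝ᵥ σ *ᵥ v).re where
  map_add σ τ := by simp [add_mulVec, dotProduct_add]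
  map_smul r σ := by simp [smul_mulVec]

variable [DecidableEq n]

lemma trace_eq_sum_star_dotProduct_mulVec (b : OrthonormalBasis n ℂ (EuclideanSpace ℂ n))
    (M : Matrix n n ℂ) : M.trace = ∑ i, star ⇑(b i) ⬝ᵥ M *ᵥ ⇑(b i) := by
  have hM : LinearMap.toMatrix (PiLp.basisFun 2 ℂ n) (PiLp.basisFun 2 ℂ n)
      (toEuclideanLin M) = M := LinearMap.toMatrix_toLin _ _ M
  have h := LinearMap.trace_eq_sum_inner (toEuclideanLin M) b
  rw [LinearMap.trace_eq_matrix_trace ℂ (PiLp.basisFun 2 ℂ n), hM] at h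
  simpa [EuclideanSpace.inner_eq_star_dotProduct, dotProduct_comm] using h

lemma re_trace_mul_le_re_trace_mul_re_trace {A C : Matrix n n ℂ} (hA : A.PosSemidef)
    (hC : C.PosSemidef) : (A * C).trace.re ≤ A.trace.re * C.trace.re := by
  set b := hC.1.eigenvectorBasis
  have hdiag : ∀ i, (star ⇑(b i) ⬝ᵥ A *ᵥ ⇑(b i)).re ≤ A.trace.re := fun i => by
    rw [trace_eq_sum_star_dotProduct_mulVec b A, Complex.re_sum]
    exact Finset.single_le_sum (fun j _ => hA.re_dotProduct_nonneg (b j)) (Finset.mem_univ i)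
  rw [trace_eq_sum_star_dotProduct_mulVec b, hC.1.trace_eq_sum_eigenvalues, Complex.re_sum,
    Complex.re_sum, Finset.mul_sum]
  refine Finset.sum_le_sum fun i _ => ?_
  rw [← mulVec_mulVec, hC.1.mulVec_eigenvectorBasis, mulVec_smul, dotProduct_smul,
    Complex.real_smul, Complex.re_ofReal_mul, mul_comm]
  simpa using mul_le_mul_of_nonneg_right (hdiag i) (hC.eigenvalues_nonneg i)

lemma two_smul_sub_one_mem_unitaryGroup {P : Matrix n n ℂ} (hPH : Pᴴ = P) (hPP : P * P = P) :
    (2 : ℂ) • P - 1 ∈ unitaryGroup n ℂ := by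
  rw [mem_unitaryGroup_iff, star_eq_conjTranspose, conjTranspose_sub, conjTranspose_smul, hPH,
    conjTranspose_one, star_ofNat, two_smul]
  simp only [add_mul, mul_add, sub_mul, mul_sub, hPP, one_mul, mul_one]
  abel

end Matrix

namespace QPaper

open Matrix

variable {n : Type*} [Fintype n]

def maxEntangledVec (U : Matrix n n ℂ) : n × n → ℂ :=
  (√(Fintype.card n))⁻¹ • vec U

lemma star_maxEntangledVec_dotProduct_mulVec (U : Matrix n n ℂ) (σ : Matrix (n × n) (n × n) ℂ) :
    star (maxEntangledVec U) ⬝ᵥ σ *ᵥ maxEntangledVec U =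
      (Fintype.card n : ℝ)⁻¹ • (star (vec U) ⬝ᵥ σ *ᵥ vec U) := by
  rw [maxEntangledVec, star_smul, star_trivial, mulVec_smul, dotProduct_smul, smul_dotProduct,
    smul_smul, ← mul_inv, Real.mul_self_sqrt (Nat.cast_nonneg _)]

variable [DecidableEq n]

lemma re_trace_mul_le_traceNorm {U : Matrix n n ℂ} (hU : U ∈ unitaryGroup n ℂ)
    (A : Matrix n n ℂ) : (U * A).trace.re ≤ traceNorm A := by
  set hH := (posSemidef_conjTranspose_mul_self A).1
  set b := hH.eigenvectorBasis
  rw [trace_eq_sum_star_dotProduct_mulVec b, Complex.re_sum, traceNorm]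
  refine Finset.sum_le_sum fun i _ => ?_
  have hUb : (star (Uᴴ *ᵥ b i) ⬝ᵥ Uᴴ *ᵥ b i).re = 1 := by
    rw [star_mulVec_dotProduct, conjTranspose_conjTranspose, mulVec_mulVec,
      ← star_eq_conjTranspose, mem_unitaryGroup_iff.mp hU, one_mulVec,
      star_dotProduct_orthonormalBasis_self]
    simp
  have hAb : (star (A *ᵥ b i) ⬝ᵥ A *ᵥ b i).re = hH.eigenvalues i := by
    rw [star_mulVec_dotProduct, mulVec_mulVec, hH.eigenvalues_eq i]
    rfl
  calc (star ⇑(b i) ⬝ᵥ (U * A) *ᵥ ⇑(b i)).re = (star (Uᴴ *ᵥ b i) ⬝ᵥ A *ᵥ b i).re := by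
        rw [star_mulVec_dotProduct, conjTranspose_conjTranspose, mulVec_mulVec]
    _ ≤ √(hH.eigenvalues i) := by
        simpa [hUb, hAb] using re_star_dotProduct_le (Uᴴ *ᵥ b i) (A *ᵥ b i)

lemma two_sub_two_mul_re_le_traceNorm_sub {ψ : n → ℂ} (hψ : star ψ ⬝ᵥ ψ = 1)
    {σ : Matrix n n ℂ} (hσ : σ.trace = 1) :
    2 - 2 * (star ψ ⬝ᵥ σ *ᵥ ψ).re ≤ traceNorm (vecMulVec ψ (star ψ) - σ) := by
  set P := vecMulVec ψ (star ψ)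
  have hPH : Pᴴ = P := by simp [P]
  have hPP : P * P = P := by simp [P, vecMulVec_mul_vecMulVec, hψ]
  have hP : P.trace = 1 := by rw [trace_vecMulVec, dotProduct_comm, hψ]
  have hPσ : (P * σ).trace = star ψ ⬝ᵥ σ *ᵥ ψ := by
    rw [vecMulVec_mul, trace_vecMulVec, dotProduct_comm, dotProduct_mulVec]
  have hR : ((2 : ℂ) • P - 1) * (P - σ) = P - (2 : ℂ) • (P * σ) + σ := by
    rw [sub_mul, mul_sub, mul_sub, smul_mul, smul_mul, hPP, one_mul, one_mul]
    module
  have h := re_trace_mul_le_traceNorm (two_smul_sub_one_mem_unitaryGroup hPH hPP) (P - σ)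
  rw [hR, trace_add, trace_sub, trace_smul, hP, hPσ, hσ] at h
  norm_num at h
  linarith

lemma re_star_vec_dotProduct_kronecker_mulVec_vec_le {U : Matrix n n ℂ}
    (hU : U ∈ unitaryGroup n ℂ) {a b : Matrix n n ℂ} (ha : IsState a) (hb : IsState b) :
    (star (vec U) ⬝ᵥ (a ⊗ₖ b) *ᵥ vec U).re ≤ 1 := by
  have hUU : Uᴴ * U = 1 := mem_unitaryGroup_iff'.mp hU
  have hpsd : (U * aᵀ * Uᴴ).PosSemidef := ha.1.transpose.mul_mul_conjTranspose_same U
  have htr : (U * aᵀ * Uᴴ).trace = 1 := by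
    rw [trace_mul_cycle, hUU, one_mul, trace_transpose, ha.2]
  have hcycle : (Uᴴ * (b * U * aᵀ)).trace = (b * (U * aᵀ * Uᴴ)).trace := by
    rw [trace_mul_comm]
    simp only [Matrix.mul_assoc]
  rw [kronecker_mulVec_vec, star_vec_dotProduct_vec, hcycle]
  simpa [hb.2, htr] using re_trace_mul_le_re_trace_mul_re_trace hb.1 hpsd

lemma re_star_vec_dotProduct_mulVec_vec_le_of_isSeparable {U : Matrix n n ℂ}
    (hU : U ∈ unitaryGroup n ℂ) {σ : Matrix (n × n) (n × n) ℂ} (hσ : IsSeparable σ) :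
    (star (vec U) ⬝ᵥ σ *ᵥ vec U).re ≤ 1 := by
  refine convexHull_min ?_ (convex_halfSpace_le (isLinearMap_re_star_dotProduct_mulVec _) 1) hσ
  rintro _ ⟨a, b, ha, hb, rfl⟩
  exact re_star_vec_dotProduct_kronecker_mulVec_vec_le hU ha hb

lemma star_maxEntangledVec_dotProduct_self [Nonempty n] {U : Matrix n n ℂ}
    (hU : U ∈ unitaryGroup n ℂ) : star (maxEntangledVec U) ⬝ᵥ maxEntangledVec U = 1 := by
  have hUU : Uᴴ * U = 1 := mem_unitaryGroup_iff'.mp hU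
  have h := star_maxEntangledVec_dotProduct_mulVec U 1
  rw [one_mulVec, one_mulVec, star_vec_dotProduct_vec, hUU, trace_one] at h
  rw [h, Complex.real_smul]
  push_cast
  exact inv_mul_cancel₀ (Nat.cast_ne_zero.mpr Fintype.card_ne_zero)

lemma re_star_maxEntangledVec_dotProduct_mulVec_le_of_isSeparable {U : Matrix n n ℂ}
    (hU : U ∈ unitaryGroup n ℂ) {σ : Matrix (n × n) (n × n) ℂ} (hσ : IsSeparable σ) :
    (star (maxEntangledVec U) ⬝ᵥ σ *ᵥ maxEntangledVec U).re ≤ (Fintype.card n : ℝ)⁻¹ := by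
  rw [star_maxEntangledVec_dotProduct_mulVec, Complex.smul_re, smul_eq_mul]
  simpa using mul_le_mul_of_nonneg_left
    (re_star_vec_dotProduct_mulVec_vec_le_of_isSeparable hU hσ) (by positivity : (0 : ℝ) ≤ _)

lemma IsMaxEntangled.exists_unitary {d : ℕ} {ρ : Matrix (Fin d × Fin d) (Fin d × Fin d) ℂ}
    (hρ : IsMaxEntangled ρ) : ∃ U ∈ unitaryGroup (Fin d) ℂ,
      ρ = vecMulVec (maxEntangledVec U) (star (maxEntangledVec U)) := by
  obtain ⟨e, horth, rfl⟩ := hρ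
  have hE : of e ∈ unitaryGroup (Fin d) ℂ := by
    rw [mem_unitaryGroup_iff]
    ext i j
    simpa [mul_apply, mul_comm, one_apply, eq_comm] using horth j i
  refine ⟨(of e)ᵀ * of e, mul_mem (transpose_mem_unitaryGroup_iff.mpr hE) hE, ?_⟩
  -- `(of e)ᵀ * of e` is symmetric, so the column-stacking convention of `vec` plays no role.
  have hψ : (fun p : Fin d × Fin d => ((√d : ℝ) : ℂ)⁻¹ * ∑ i, e i p.1 * e i p.2) =
      maxEntangledVec ((of e)ᵀ * of e) := by
    ext p
    simp [maxEntangledVec, vec, mul_apply, mul_comm, Complex.real_smul]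
  rw [hψ]

lemma exists_isState [Nonempty n] : ∃ a : Matrix n n ℂ, IsState a := by
  obtain ⟨i⟩ := ‹Nonempty n›
  refine ⟨vecMulVec (Pi.single i 1) (star (Pi.single i 1)), posSemidef_vecMulVec_self_star _, ?_⟩
  simp [trace_vecMulVec]

lemma le_Dsep {m : Type*} [Fintype m] [DecidableEq m] [Nonempty n] [Nonempty m]
    {ρ : Matrix (n × m) (n × m) ℂ} {x : ℝ}
    (h : ∀ σ, IsState σ → IsSeparable σ → x ≤ traceNorm (ρ - σ)) : x ≤ Dsep ρ := by
  obtain ⟨a, ha⟩ := exists_isState (n := n)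
  obtain ⟨b, hb⟩ := exists_isState (n := m)
  have hab : IsState (a ⊗ₖ b) :=
    ⟨ha.1.kronecker hb.1, by rw [trace_kronecker, ha.2, hb.2, one_mul]⟩
  refine le_csInf ⟨_, a ⊗ₖ b, hab, subset_convexHull ℝ _ ⟨a, b, ha, hb, rfl⟩, rfl⟩ ?_
  rintro _ ⟨σ, hσ, hsep, rfl⟩
  exact h σ hσ hsep

lemma two_div_le_four_mul_log_two_div_log {x : ℝ} (hx : 1 < x) :
    2 / x ≤ 4 * Real.log 2 / Real.log x := by
  rw [div_le_div_iff₀ (by linarith) (Real.log_pos hx)]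
  nlinarith [Real.log_le_sub_one_of_pos (by linarith : 0 < x), Real.log_two_gt_d9]

/-- bound (7). For a maximally entangled pure state `ρ*` on `H_A ⊗ H_B`
with `dim H_A = dim H_B = d ≥ 2`, the trace-norm distance to the separable states satisfies
`D_s(ρ*) ≥ 2 - (4 log 2)/(log d)`. -/
theorem Dsep_maxEntangled_lower_bound {d : ℕ} (hd : 2 ≤ d)
    (ρ : Matrix (Fin d × Fin d) (Fin d × Fin d) ℂ) (hρ : IsMaxEntangled ρ) :
    Dsep ρ ≥ 2 - 4 * Real.log 2 / Real.log d := by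
  obtain ⟨U, hU, rfl⟩ := hρ.exists_unitary
  have : Nonempty (Fin d) := ⟨⟨0, by omega⟩⟩
  have hlog : 2 / (d : ℝ) ≤ 4 * Real.log 2 / Real.log d :=
    two_div_le_four_mul_log_two_div_log (by exact_mod_cast hd)
  refine le_Dsep fun σ hσ hsep => ?_
  have hoverlap := re_star_maxEntangledVec_dotProduct_mulVec_le_of_isSeparable hU hsep
  rw [Fintype.card_fin] at hoverlap
  calc 2 - 4 * Real.log 2 / Real.log d
      ≤ 2 - 2 * (star (maxEntangledVec U) ⬝ᵥ σ *ᵥ maxEntangledVec U).re := by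
        linarith [div_eq_mul_inv (2 : ℝ) d]
    _ ≤ traceNorm (vecMulVec (maxEntangledVec U) (star (maxEntangledVec U)) - σ) :=
        two_sub_two_mul_re_le_traceNorm_sub (star_maxEntangledVec_dotProduct_self hU) hσ.2

end QPaper
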